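/- arXiv:0812.0749 — 2 statements merged into one kernel-verified Lean document; each statement's English description precedes it below -/
import Mathlib

section
/- Let j : I°_{≤1} ⥤ I° be the full inclusion. For every object o of I° (i.e. every nonzero finitely supported function o : ℕ →₀ ℕ), the comma category StructuredArrow o j (the category of objects of I°_{≤1} under o) has an initial object, namely the pair consisting of o' defined by o' i = min (o i) 1 (which is nonzero and {0,1}-valued) together with the unique morphism o ⟶ o' coming from o' ≤ o. -/
open CategoryTheory CategoryTheory.Limits

/-- The monomial category `I`: objects are finitely supported functions `ℕ →₀ ℕ`
(exponent vectors of monomials in the variables `x_1, x_2, …`), with a unique morphism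
`f ⟶ g` iff `g ≤ f` pointwise (i.e. `g` divides `f`).  It is realized as the preorder
category on the order dual of `ℕ →₀ ℕ`.  `I°` is the full subcategory of nonzero
(nonconstant) monomials. -/
abbrev Io : Type := ObjectProperty.FullSubcategory fun f : (ℕ →₀ ℕ)ᵒᵈ => OrderDual.ofDual f ≠ 0

/-- The category `I°_{≤1}` of nonconstant monomials containing each variable with
multiplicity at most `1`. -/
abbrev Io1 : Type := ObjectProperty.FullSubcategory fun f : (ℕ →₀ ℕ)ᵒᵈ =>
  OrderDual.ofDual f ≠ 0 ∧ ∀ i, OrderDual.ofDual f i ≤ 1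

/-- The full inclusion `j : I°_{≤1} ⥤ I°`. -/
def jIncl : Io1 ⥤ Io := ObjectProperty.ιOfLE fun _ h => h.1

/-- Truncation of the exponents of a monomial at `1`: `(trunc o) i = min (o i) 1`. -/
noncomputable def trunc (o : ℕ →₀ ℕ) : ℕ →₀ ℕ := o.mapRange (fun k => min k 1) (by simp)

lemma trunc_apply (o : ℕ →₀ ℕ) (i : ℕ) : trunc o i = min (o i) 1 :=
  Finsupp.mapRange_apply ..

lemma trunc_le (o : ℕ →₀ ℕ) : trunc o ≤ o :=
  Finsupp.le_def.mpr fun i => by rw [trunc_apply]; exact min_le_left _ _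

lemma trunc_le_one (o : ℕ →₀ ℕ) (i : ℕ) : trunc o i ≤ 1 := by
  rw [trunc_apply]; exact min_le_right _ _

lemma trunc_ne_zero {o : ℕ →₀ ℕ} (h : o ≠ 0) : trunc o ≠ 0 := by
  obtain ⟨i, hi⟩ := Finsupp.ne_iff.mp h
  refine Finsupp.ne_iff.mpr ⟨i, ?_⟩
  simp only [trunc_apply, Finsupp.coe_zero, Pi.zero_apply] at *
  omega

/-- The truncated monomial `o'`, `o' i = min (o i) 1`, as an object of `I°_{≤1}`. -/
noncomputable def truncObj (o : Io) : Io1 :=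
  ⟨OrderDual.toDual (trunc (OrderDual.ofDual o.obj)),
    trunc_ne_zero o.property, trunc_le_one _⟩

/-- The unique morphism `o ⟶ j.obj (truncObj o)` in `I°`, coming from `trunc o ≤ o`. -/
noncomputable def truncHom (o : Io) : o ⟶ jIncl.obj (truncObj o) :=
  ObjectProperty.homMk (homOfLE (OrderDual.le_toDual.mpr (trunc_le _)))

lemma le_trunc_iff {f o : ℕ →₀ ℕ} : f ≤ trunc o ↔ f ≤ o ∧ ∀ i, f i ≤ 1 := by
  refine ⟨fun h => ⟨h.trans (trunc_le o), fun i => (h i).trans (trunc_le_one o i)⟩,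
    fun ⟨hf, hf1⟩ i => ?_⟩
  rw [trunc_apply]
  exact le_min (hf i) (hf1 i)

instance ObjectProperty.FullSubcategory.isThin {C : Type*} [Category C] [Quiver.IsThin C]
    (P : ObjectProperty C) : Quiver.IsThin P.FullSubcategory :=
  fun _ _ => ⟨fun _ _ => ObjectProperty.hom_ext _ (Subsingleton.elim _ _)⟩

instance StructuredArrow.isThin {C D : Type*} [Category C] [Category D] [Quiver.IsThin C]
    (S : D) (T : C ⥤ D) : Quiver.IsThin (StructuredArrow S T) :=
  fun _ _ => ⟨fun _ _ => StructuredArrow.hom_ext _ _ (Subsingleton.elim _ _)⟩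

/-- For every object `o` of `I°`, the comma category `StructuredArrow o j` of objects of
`I°_{≤1}` under `o` has an initial object, namely the truncation `o' = min (o ·) 1`
together with the unique morphism `o ⟶ o'`. -/
theorem structuredArrow_hasInitial_trunc (o : Io) :
    Nonempty (IsInitial (StructuredArrow.mk (truncHom o))) := by
  refine ⟨IsInitial.ofUniqueHom
    (fun X => StructuredArrow.homMk (ObjectProperty.homMk (homOfLE ?_)))
    fun _ _ => Subsingleton.elim _ _⟩
  have hX : OrderDual.ofDual X.right.obj ≤ OrderDual.ofDual o.obj := leOfHom X.hom.hom
  exact le_trunc_iff.mpr ⟨hX, X.right.property.2⟩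
end

section
/- The full inclusion functor j : I°_{≤1} ⥤ I° is a final functor (in the sense of CategoryTheory.Functor.Final): for every object o of I° the comma category StructuredArrow o j is connected (indeed it has an initial object). Consequently, for any functor G : I° ⥤ C into a category C, a colimit of G exists if and only if a colimit of its restriction j ⋙ G exists, and the canonical map between them is an isomorphism. -/
/-!
A nonzero monomial `o` has a greatest divisor in `I°_{≤1}`, namely its squarefree part
(all exponents truncated to `1`). As a morphism `o ⟶ j (squarefreePart o)` this is an initial
object of `StructuredArrow o j`, so these comma categories are connected and `j` is final.
-/

open CategoryTheory CategoryTheory.Limits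

universe v u

namespace CategoryTheory.ObjectProperty

variable {α : Type*} [Preorder α] {P Q : ObjectProperty α}

theorem final_ιOfLE_of_isLeast (h : P ≤ Q)
    (hleast : ∀ x, Q x → ∃ y, IsLeast {y | P y ∧ x ≤ y} y) : (ιOfLE h).Final where
  out x := by
    obtain ⟨y, ⟨hyP, hxy⟩, hy⟩ := hleast x.obj x.property
    let y' : FullSubcategory P := ⟨y, hyP⟩
    refine isConnected_of_isInitial _
      (x := StructuredArrow.mk (Y := y') (T := ιOfLE h) (homMk (homOfLE hxy))) ?_
    refine IsInitial.ofUniqueHom (fun z => StructuredArrow.homMk (homMk (homOfLE ?_)) ?_) ?_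
    · exact hy ⟨z.right.property, leOfHom z.hom.hom⟩
    · exact hom_ext _ (Subsingleton.elim _ _)
    · exact fun _ f => StructuredArrow.hom_ext f _ (hom_ext _ (Subsingleton.elim _ _))

end CategoryTheory.ObjectProperty

namespace Finsupp

variable {ι : Type*}

noncomputable def squarefreePart (f : ι →₀ ℕ) : ι →₀ ℕ := f.mapRange (min · 1) (by simp)

@[simp]
theorem squarefreePart_apply (f : ι →₀ ℕ) (i : ι) : f.squarefreePart i = min (f i) 1 :=
  mapRange_apply ..

theorem squarefreePart_eq_zero_iff {f : ι →₀ ℕ} : f.squarefreePart = 0 ↔ f = 0 := by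
  simp [Finsupp.ext_iff]

theorem isGreatest_squarefreePart {f : ι →₀ ℕ} (hf : f ≠ 0) :
    IsGreatest {g | g ≠ 0 ∧ (∀ i, g i ≤ 1) ∧ g ≤ f} f.squarefreePart := by
  refine ⟨⟨mt squarefreePart_eq_zero_iff.1 hf, fun i => by simp, fun i => by simp⟩, ?_⟩
  rintro g ⟨-, hg1, hgf⟩ i
  simpa using ⟨hgf i, hg1 i⟩

end Finsupp

instance final_jIncl : jIncl.Final :=
  ObjectProperty.final_ιOfLE_of_isLeast _ fun x hx =>
    ⟨OrderDual.toDual x.ofDual.squarefreePart, by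
      obtain ⟨⟨h0, h1, hle⟩, hmax⟩ := Finsupp.isGreatest_squarefreePart hx
      exact ⟨⟨⟨h0, h1⟩, hle⟩, fun y ⟨⟨hy0, hy1⟩, hxy⟩ => hmax ⟨hy0, hy1, hxy⟩⟩⟩

/-- The inclusion `j : I°_{≤1} ⥤ I°` is a final functor (each comma category
`StructuredArrow o j` is connected); consequently, for any functor `G : I° ⥤ C`,
a colimit of `G` exists iff a colimit of the restriction `j ⋙ G` exists, and in that
case the canonical map `colimit (j ⋙ G) ⟶ colimit G` is an isomorphism. -/
theorem jIncl_final :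
    jIncl.Final ∧
      ∀ (C : Type u) [Category.{v} C] (G : Io ⥤ C),
        (HasColimit G ↔ HasColimit (jIncl ⋙ G)) ∧
        ∀ [HasColimit G] [HasColimit (jIncl ⋙ G)], IsIso (colimit.pre G jIncl) :=
  ⟨inferInstance, fun _ _ _ =>
    ⟨⟨fun _ => inferInstance, fun _ => Functor.Final.hasColimit_of_comp jIncl⟩, inferInstance⟩⟩
end
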